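/- In the intermediate grading group G, set B_t = (½; ½, ½ − t) and C_t = (−½; ½, ½ − t) for integers t ≥ 1. For all integers i, j ≥ 1, every natural number k, every integer l, and every h in the three-element set {(0; 0, 0), (−½; 0, 1), (−3/2; 0, −1)}, the equation λ·C_j^{−1}·(−2k; 0, 0)·h·B_i·(½; 1, 0)^l = (0; 0, 0) holds if and only if h = (0; 0, 0), i = j, k = 1, and l = 0. (This classifies the permissible differential terms from c_{p−j} to b_{p−i} in CFD⁻ of the (p,1)-cable: the algebra coefficient must be U or a length-four Reeb chord.) -/

import Mathlib

/-- The underlying carrier of the intermediate grading group `G`: triples `(m; a, b)`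
of rational numbers (restricted to half-integers in the membership predicate `memG`),
with multiplication `(m; a, b)·(m′; a′, b′) = (m + m′ + ab′ − a′b; a + a′, b + b′)`. -/
@[ext]
structure IGG where
  m : ℚ
  a : ℚ
  b : ℚ

namespace IGG

instance : Mul IGG :=
  ⟨fun x y => ⟨x.m + y.m + x.a * y.b - y.a * x.b, x.a + y.a, x.b + y.b⟩⟩
instance : One IGG := ⟨⟨0, 0, 0⟩⟩
instance : Inv IGG := ⟨fun x => ⟨-x.m, -x.a, -x.b⟩⟩

@[simp] theorem mul_m (x y : IGG) : (x * y).m = x.m + y.m + x.a * y.b - y.a * x.b := rfl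
@[simp] theorem mul_a (x y : IGG) : (x * y).a = x.a + y.a := rfl
@[simp] theorem mul_b (x y : IGG) : (x * y).b = x.b + y.b := rfl
@[simp] theorem one_m : (1 : IGG).m = 0 := rfl
@[simp] theorem one_a : (1 : IGG).a = 0 := rfl
@[simp] theorem one_b : (1 : IGG).b = 0 := rfl
@[simp] theorem inv_m (x : IGG) : x⁻¹.m = -x.m := rfl
@[simp] theorem inv_a (x : IGG) : x⁻¹.a = -x.a := rfl
@[simp] theorem inv_b (x : IGG) : x⁻¹.b = -x.b := rfl

instance : Group IGG :=
  Group.ofLeftAxioms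
    (fun x y z => by ext <;> simp <;> ring)
    (fun x => by ext <;> simp)
    (fun x => by ext <;> simp)

end IGG

/-- Membership in the intermediate grading group `G`: triples `(m; a, b)` of
half-integers such that `a + b ∈ ℤ` and `m + ((2a+1)(a+b+1)+1)/2 ∈ ℤ`. -/
def memG (x : IGG) : Prop :=
  (∃ n : ℤ, x.m = n / 2) ∧ (∃ n : ℤ, x.a = n / 2) ∧ (∃ n : ℤ, x.b = n / 2) ∧
  (∃ n : ℤ, x.a + x.b = (n : ℚ)) ∧
  (∃ n : ℤ, x.m + ((2 * x.a + 1) * (x.a + x.b + 1) + 1) / 2 = (n : ℚ))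

/-- `λ = (1; 0, 0)`. -/
def lambdaG : IGG := ⟨1, 0, 0⟩
/-- `B_t = (½; ½, ½ − t)`, the `G`-grading of the generator `b_{p−t}` of `CFD⁻` of
the `(p,1)`-cable. -/
def Bgr (t : ℤ) : IGG := ⟨1/2, 1/2, 1/2 - (t : ℚ)⟩
/-- `C_t = (−½; ½, ½ − t)`, the `G`-grading of the generator `c_{p−t}` of `CFD⁻` of
the `(p,1)`-cable. -/
def Cgr (t : ℤ) : IGG := ⟨-(1/2), 1/2, 1/2 - (t : ℚ)⟩

/-!
The `a`-coordinate is additive and equals `l` on the product, so `l = 0`. Writing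
`h = (μ; 0, β)`, the `b`-coordinate of what remains is `β - (i - j)` and, once that vanishes,
its `m`-coordinate is `2 - 2k + (μ - β/2)`. Now `μ - β/2` is `0` for `h = (0; 0, 0)` and `-1`
for the two other choices of `h`, and `1 - 2k` never vanishes for an integer `k`.
-/

namespace IGG

theorem zpow_eq_mk (x : IGG) (n : ℤ) : x ^ n = ⟨n * x.m, n * x.a, n * x.b⟩ := by
  induction n using Int.induction_on with
  | zero => ext <;> simp
  | succ n ih => rw [zpow_add_one, ih]; ext <;> simp <;> ring
  | pred n ih => rw [zpow_sub_one, ih]; ext <;> simp <;> ring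

theorem mk_eq_one_iff (m b : ℚ) : (⟨m, 0, b⟩ : IGG) = 1 ↔ m = 0 ∧ b = 0 := by
  simp [IGG.ext_iff]

theorem mul_zpow_eq_one_iff {x g : IGG} (hx : x.a = 0) (hg : g.a ≠ 0) (l : ℤ) :
    x * g ^ l = 1 ↔ x = 1 ∧ l = 0 := by
  constructor
  · intro h
    have hl : (l : ℚ) * g.a = 0 := by simpa [hx, zpow_eq_mk] using congrArg IGG.a h
    obtain rfl : l = 0 := by exact_mod_cast (mul_eq_zero.mp hl).resolve_right hg
    simpa using h
  · rintro ⟨rfl, rfl⟩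
    simp

end IGG

theorem lambdaG_mul_Cgr_inv_mul_Bgr (i j : ℤ) (c μ β : ℚ) :
    lambdaG * (Cgr j)⁻¹ * ⟨c, 0, 0⟩ * ⟨μ, 0, β⟩ * Bgr i =
      ⟨2 + c + μ - β / 2 + ((i - j) - β) / 2, 0, β - (i - j)⟩ := by
  ext <;> simp [lambdaG, Cgr, Bgr] <;> ring

theorem lambdaG_mul_Cgr_inv_mul_Bgr_eq_one_iff (i j : ℤ) (c μ β : ℚ) :
    lambdaG * (Cgr j)⁻¹ * ⟨c, 0, 0⟩ * ⟨μ, 0, β⟩ * Bgr i = 1 ↔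
      (i - j : ℚ) = β ∧ 2 + c + μ - β / 2 = 0 := by
  rw [lambdaG_mul_Cgr_inv_mul_Bgr, IGG.mk_eq_one_iff]
  constructor
  · rintro ⟨hm, hb⟩
    have hβ : (i - j : ℚ) = β := by linarith
    exact ⟨hβ, by rw [hβ] at hm; linarith⟩
  · rintro ⟨hβ, hm⟩
    rw [hβ]
    constructor <;> linarith

theorem one_sub_two_mul_ne_zero (k : ℕ) : 1 - 2 * (k : ℚ) ≠ 0 := by
  have : (1 : ℤ) - 2 * k ≠ 0 := by omega
  exact_mod_cast this

/-- In the intermediate grading group `G`, for all integers `i, j ≥ 1`, every natural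
number `k`, every integer `l`, and every `h` in the three-element set
`{(0; 0, 0), (−½; 0, 1), (−3/2; 0, −1)}`, the equation
`λ·C_j⁻¹·(−2k; 0, 0)·h·B_i·(½; 1, 0)^l = (0; 0, 0)` holds if and only if
`h = (0; 0, 0)`, `i = j`, `k = 1`, and `l = 0`. (This classifies the permissible
differential terms from `c_{p−j}` to `b_{p−i}` in `CFD⁻` of the `(p,1)`-cable: the
algebra coefficient must be `U` or a length-four Reeb chord.) -/
theorem cable_grading_constraint_c_to_b :
    ∀ (i j : ℤ), 1 ≤ i → 1 ≤ j → ∀ (k : ℕ) (l : ℤ),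
      ∀ h ∈ ({⟨0, 0, 0⟩, ⟨-(1/2), 0, 1⟩, ⟨-(3/2), 0, -1⟩} : Set IGG),
        (lambdaG * (Cgr j)⁻¹ * (⟨-2 * (k : ℚ), 0, 0⟩ : IGG) * h * Bgr i *
            (⟨1/2, 1, 0⟩ : IGG) ^ l = (⟨0, 0, 0⟩ : IGG) ↔
          (h = (⟨0, 0, 0⟩ : IGG) ∧ i = j ∧ k = 1 ∧ l = 0)) := by
  intro i j _ _ k l h hh
  change _ = (1 : IGG) ↔ _
  simp only [Set.mem_insert_iff, Set.mem_singleton_iff] at hh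
  rcases hh with rfl | rfl | rfl <;>
    rw [IGG.mul_zpow_eq_one_iff (by simp [lambdaG, Cgr, Bgr]) (by norm_num),
      lambdaG_mul_Cgr_inv_mul_Bgr_eq_one_iff]
  · constructor
    · rintro ⟨⟨hij, hk⟩, rfl⟩
      exact ⟨rfl, by exact_mod_cast sub_eq_zero.mp hij,
        by exact_mod_cast (by linarith : (k : ℚ) = 1), rfl⟩
    · rintro ⟨-, rfl, rfl, rfl⟩
      norm_num
  all_goals
    refine iff_of_false ?_ (by norm_num)
    rintro ⟨⟨-, hm⟩, -⟩
    exact one_sub_two_mul_ne_zero k (by linarith)
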